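/- arXiv:0711.4005 — 2 statements merged into one kernel-verified Lean document; each statement's English description precedes it below -/
import Mathlib

section
/- (Discrete Gevrey–Gronwall induction.) Let H > 0, C > 0, and let j₀ be a nonnegative integer with 2^{5 j₀} > 100 · max(1, C²) · H². Suppose that for each integer j ≥ j₀, I_j : [0,∞) → [0,∞) is a differentiable function satisfying: (i) I_{j₀}(t) ≤ H² for all t ≥ 0; (ii) I_j(0) ≤ H² for all j ≥ j₀; (iii) I_j'(t) + 2^{4j} I_j(t) ≤ C · 2^{-j} H² · I_{j-1}(t) for all j > j₀ and all t ≥ 0. Then there exists a constant C₁ depending only on C such that for all j ≥ j₀ and all t ≥ 0: I_j(t) ≤ C₁^{j+1} · 2^{-min(t, 5/2) (j - j₀)²} · H². -/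
/-!
Induction on `j` with `C₁ = 2`. For `κ = j - j₀ ≥ 1`, the bound for `I_{j-1}` is at most
`2^(5κ - 5/2) (2^(-κ² t) + 2^(-5κ²/2))` times `2^j H²`, because
`-s (κ-1)² ≤ 5κ - 5/2 - s κ²` for `s ≤ 5/2`. The smallness `100 C H² < 2^(5 j₀)` turns the
prefactor `C 2^(-j) H² 2^(5κ - 5/2)` into at most `2^(4j) / 2`, and `κ² log 2 ≤ 2^(4j) / 2`, so
`2^j H² (2^(-κ² t) + 2^(-5κ²/2))` is a supersolution of `y' + 2^(4j) y = C 2^(-j) H² I_{j-1}`.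
Comparison (monotonicity of `e^(2^(4j) t) (I_j - barrier)`) and
`2^(-κ² t) + 2^(-5κ²/2) ≤ 2 · 2^(-min(t, 5/2) κ²)` close the induction.
-/

open Set Real

theorem le_on_Ici_of_derivWithin_add_mul_le {f B : ℝ → ℝ} {a t₀ : ℝ}
    (hf : DifferentiableOn ℝ f (Ici t₀)) (hB : DifferentiableOn ℝ B (Ici t₀))
    (h₀ : f t₀ ≤ B t₀)
    (h : ∀ t ∈ Ici t₀,
      derivWithin f (Ici t₀) t + a * f t ≤ derivWithin B (Ici t₀) t + a * B t) :
    ∀ t ∈ Ici t₀, f t ≤ B t := by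
  set w : ℝ → ℝ := fun t => exp (a * t) * (f t - B t)
  have hw : ∀ t ∈ Ici t₀, HasDerivWithinAt w
      (exp (a * t) * (a * (f t - B t) + (derivWithin f (Ici t₀) t - derivWithin B (Ici t₀) t)))
      (Ici t₀) t := by
    intro t ht
    have hexp : HasDerivAt (fun s => exp (a * s)) (exp (a * t) * a) t := by
      simpa using ((hasDerivAt_id t).const_mul a).exp
    exact (hexp.hasDerivWithinAt.mul
      ((hf t ht).hasDerivWithinAt.sub (hB t ht).hasDerivWithinAt)).congr_deriv
        (by simp only [Pi.sub_apply]; ring)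
  have hw_anti : AntitoneOn w (Ici t₀) :=
    antitoneOn_of_hasDerivWithinAt_nonpos (convex_Ici t₀)
      (fun t ht => (hw t ht).continuousWithinAt)
      (fun t ht => (hw t (interior_subset ht)).mono interior_subset)
      fun t ht => mul_nonpos_of_nonneg_of_nonpos (exp_pos _).le
        (by linarith [h t (interior_subset ht)])
  intro t ht
  have hwt : exp (a * t) * (f t - B t) ≤ 0 :=
    (hw_anti self_mem_Ici ht ht).trans
      (mul_nonpos_of_nonneg_of_nonpos (exp_pos _).le (sub_nonpos.2 h₀))
  exact sub_nonpos.1 (nonpos_of_mul_nonpos_right hwt (exp_pos _))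

theorem le_exp_barrier_of_derivWithin_add_mul_le {f g : ℝ → ℝ} {A c D K μ ε : ℝ}
    (hf : DifferentiableOn ℝ f (Ici 0)) (hA : 0 ≤ A) (hc : 0 ≤ c) (hK : 0 ≤ K) (hε : 0 ≤ ε)
    (hμ : μ ≤ A / 2) (hcD : c * D ≤ A / 2 * K) (h₀ : f 0 ≤ K * (1 + ε))
    (hode : ∀ t ∈ Ici 0, derivWithin f (Ici 0) t + A * f t ≤ c * g t)
    (hg : ∀ t ∈ Ici 0, g t ≤ D * (exp (-μ * t) + ε)) :
    ∀ t ∈ Ici 0, f t ≤ K * (exp (-μ * t) + ε) := by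
  have hB : ∀ t, HasDerivAt (fun s => K * (exp (-μ * s) + ε))
      (K * (-μ * exp (-μ * t))) t := by
    intro t
    have hlin : HasDerivAt (fun s => -μ * s) (-μ) t := by
      simpa using (hasDerivAt_id t).const_mul (-μ)
    exact ((hlin.exp.add_const ε).const_mul K).congr_deriv (by ring)
  refine le_on_Ici_of_derivWithin_add_mul_le (a := A) hf
    (fun t _ => (hB t).differentiableAt.differentiableWithinAt) (by simpa using h₀)
    fun t ht => ?_
  rw [(hB t).hasDerivWithinAt.derivWithin (uniqueDiffOn_Ici 0 t ht)]
  have he := exp_pos (-μ * t)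
  calc derivWithin f (Ici 0) t + A * f t ≤ c * g t := hode t ht
    _ ≤ c * (D * (exp (-μ * t) + ε)) := mul_le_mul_of_nonneg_left (hg t ht) hc
    _ = c * D * (exp (-μ * t) + ε) := by ring
    _ ≤ A / 2 * K * (exp (-μ * t) + ε) := mul_le_mul_of_nonneg_right hcD (by positivity)
    _ ≤ K * (-μ * exp (-μ * t)) + A * (K * (exp (-μ * t) + ε)) := by
      nlinarith [mul_nonneg (mul_nonneg hK he.le) (sub_nonneg.2 hμ),
        mul_nonneg (mul_nonneg hA hK) hε]

theorem two_rpow_neg_min_mul_sub_one_sq_le {κ s : ℝ} (hκ : 1 ≤ κ) :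
    (2:ℝ) ^ (-min s (5/2) * (κ - 1) ^ 2)
      ≤ 2 ^ (5 * κ - 5/2) * (2 ^ (-(s * κ ^ 2)) + 2 ^ (-(5/2) * κ ^ 2)) := by
  rw [mul_add, ← rpow_add two_pos, ← rpow_add two_pos]
  rcases le_total s (5/2) with hs | hs
  · rw [min_eq_left hs]
    refine le_add_of_le_of_nonneg (rpow_le_rpow_of_exponent_le one_le_two ?_) (by positivity)
    nlinarith
  · rw [min_eq_right hs]
    refine le_add_of_nonneg_of_le (by positivity) (le_of_eq ?_)
    ring_nf

theorem two_rpow_add_two_rpow_le_two_mul_min {κ s : ℝ} :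
    (2:ℝ) ^ (-(s * κ ^ 2)) + 2 ^ (-(5/2) * κ ^ 2) ≤ 2 * 2 ^ (-min s (5/2) * κ ^ 2) := by
  have h1 : (2:ℝ) ^ (-(s * κ ^ 2)) ≤ 2 ^ (-min s (5/2) * κ ^ 2) :=
    rpow_le_rpow_of_exponent_le one_le_two
      (by nlinarith [min_le_left s (5/2), sq_nonneg κ])
  have h2 : (2:ℝ) ^ (-(5/2) * κ ^ 2) ≤ 2 ^ (-min s (5/2) * κ ^ 2) :=
    rpow_le_rpow_of_exponent_le one_le_two
      (by nlinarith [min_le_right s (5/2), sq_nonneg κ])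
  linarith

theorem two_mul_sq_le_two_pow_four_mul (j : ℕ) : 2 * j ^ 2 ≤ 2 ^ (4 * j) := by
  rcases Nat.eq_zero_or_pos j with rfl | hj
  · simp
  calc 2 * j ^ 2 ≤ 2 * (2 ^ j) ^ 2 := by gcongr; exact (Nat.lt_two_pow_self).le
    _ = 2 ^ (2 * j + 1) := by ring
    _ ≤ 2 ^ (4 * j) := Nat.pow_le_pow_right two_pos (by omega)

theorem log_two_mul_sq_le {κ : ℝ} {j : ℕ} (hκ₀ : 0 ≤ κ) (hκ : κ ≤ j) :
    log 2 * κ ^ 2 ≤ 2 ^ (4 * j) / 2 := by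
  have hj : (2 * j ^ 2 : ℝ) ≤ 2 ^ (4 * j) := by exact_mod_cast two_mul_sq_le_two_pow_four_mul j
  have hlog : log 2 ≤ 1 := by linarith [log_two_lt_d9]
  have hκ2 : κ ^ 2 ≤ (j:ℝ) ^ 2 := pow_le_pow_left₀ hκ₀ hκ 2
  nlinarith [log_pos one_lt_two, sq_nonneg κ]

theorem mul_two_rpow_le_two_pow_four_mul_div_two {C H : ℝ} {j₀ j : ℕ}
    (hCH : 100 * (C * H ^ 2) < 2 ^ (5 * j₀)) :
    C * 2 ^ (-(j:ℝ)) * H ^ 2 * 2 ^ (5 * ((j:ℝ) - j₀) - 5/2) ≤ 2 ^ (4 * j) / 2 := by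
  have hpow : (2:ℝ) ^ (-(j:ℝ)) * 2 ^ (5 * ((j:ℝ) - j₀) - 5/2) * 2 ^ (5 * j₀)
      = 2 ^ (4 * j) * 2 ^ (-(5/2) : ℝ) := by
    rw [← rpow_natCast, ← rpow_natCast, ← rpow_add two_pos, ← rpow_add two_pos,
      ← rpow_add two_pos]
    push_cast
    ring_nf
  have h52 : (2:ℝ) ^ (-(5/2) : ℝ) ≤ 1 := rpow_le_one_of_one_le_of_nonpos one_le_two (by norm_num)
  have h5 : (0:ℝ) < 2 ^ (5 * j₀) := by positivity
  have h4 : (0:ℝ) ≤ 2 ^ (4 * j) := by positivity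
  have hX : (0:ℝ) ≤ 2 ^ (-(j:ℝ)) * 2 ^ (5 * ((j:ℝ) - j₀) - 5/2) := by positivity
  nlinarith [mul_nonneg h4 (rpow_nonneg zero_le_two (-(5/2) : ℝ))]

theorem gevrey_bound_succ {C H : ℝ} (hC : 0 ≤ C) {j₀ m : ℕ} (hm : j₀ ≤ m)
    (hCH : 100 * (C * H ^ 2) < 2 ^ (5 * j₀)) {f g : ℝ → ℝ}
    (hf : DifferentiableOn ℝ f (Ici 0)) (h₀ : f 0 ≤ H ^ 2)
    (hode : ∀ t ∈ Ici 0, derivWithin f (Ici 0) t + 2 ^ (4 * (m + 1)) * f t ≤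
      C * 2 ^ (-((m + 1 : ℕ) : ℝ)) * H ^ 2 * g t)
    (hg : ∀ t ∈ Ici 0, g t ≤ 2 ^ (m + 1) * 2 ^ (-min t (5/2) * ((m : ℝ) - j₀) ^ 2) * H ^ 2) :
    ∀ t ∈ Ici 0,
      f t ≤ 2 ^ (m + 1 + 1) * 2 ^ (-min t (5/2) * (((m + 1 : ℕ) : ℝ) - j₀) ^ 2) * H ^ 2 := by
  set κ : ℝ := ((m + 1 : ℕ) : ℝ) - j₀
  have hκ : 1 ≤ κ := by
    have : (j₀ : ℝ) ≤ m := by exact_mod_cast hm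
    simp only [κ]; push_cast; linarith
  have hκ_prev : (m : ℝ) - j₀ = κ - 1 := by simp only [κ]; push_cast; ring
  set K : ℝ := 2 ^ (m + 1) * H ^ 2
  set ε : ℝ := 2 ^ (-(5/2) * κ ^ 2)
  have hexp : ∀ t, exp (-(log 2 * κ ^ 2) * t) = 2 ^ (-(t * κ ^ 2)) := fun t => by
    rw [rpow_def_of_pos two_pos]; ring_nf
  have hκ_le : κ ≤ ((m + 1 : ℕ) : ℝ) := sub_le_self _ (Nat.cast_nonneg j₀)
  have hbarrier := le_exp_barrier_of_derivWithin_add_mul_le (g := g) (K := K)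
    (D := K * 2 ^ (5 * κ - 5/2)) (ε := ε) (μ := log 2 * κ ^ 2) hf (by positivity)
    (by positivity) (by positivity) (by positivity)
    (log_two_mul_sq_le (by linarith) hκ_le) ?_ ?_ hode ?_
  · intro t ht
    calc f t ≤ K * (2 ^ (-(t * κ ^ 2)) + ε) := by rw [← hexp]; exact hbarrier t ht
      _ ≤ K * (2 * 2 ^ (-min t (5/2) * κ ^ 2)) :=
        mul_le_mul_of_nonneg_left two_rpow_add_two_rpow_le_two_mul_min (by positivity)
      _ = _ := by ring
  · calc C * 2 ^ (-((m + 1 : ℕ) : ℝ)) * H ^ 2 * (K * 2 ^ (5 * κ - 5/2))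
        = C * 2 ^ (-((m + 1 : ℕ) : ℝ)) * H ^ 2 * 2 ^ (5 * κ - 5/2) * K := by ring
      _ ≤ 2 ^ (4 * (m + 1)) / 2 * K :=
        mul_le_mul_of_nonneg_right (mul_two_rpow_le_two_pow_four_mul_div_two hCH)
          (by positivity)
  · have : H ^ 2 ≤ K := le_mul_of_one_le_left (sq_nonneg H) (one_le_pow₀ one_le_two)
    nlinarith [rpow_nonneg zero_le_two (-(5/2) * κ ^ 2), sq_nonneg H]
  · intro t ht
    rw [hexp]
    calc g t ≤ 2 ^ (m + 1) * 2 ^ (-min t (5/2) * (κ - 1) ^ 2) * H ^ 2 := by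
          rw [← hκ_prev]; exact hg t ht
      _ ≤ 2 ^ (m + 1) * (2 ^ (5 * κ - 5/2) * (2 ^ (-(t * κ ^ 2)) + ε)) * H ^ 2 := by
          gcongr; exact two_rpow_neg_min_mul_sub_one_sq_le hκ
      _ = K * 2 ^ (5 * κ - 5/2) * (2 ^ (-(t * κ ^ 2)) + ε) := by ring

/-- Discrete Gevrey–Gronwall induction: from the family of
differential inequalities `I_j' + 2^{4j} I_j ≤ C 2^{-j} H² I_{j-1}` (`j > j₀`),
together with `I_{j₀} ≤ H²` and `I_j(0) ≤ H²`, one deduces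
`I_j(t) ≤ C₁^{j+1} 2^{-min(t,5/2)(j-j₀)²} H²`, with `C₁` depending only on `C`. -/
theorem discrete_gevrey_gronwall
    (C : ℝ) (hC : 0 < C) :
    ∃ C₁ : ℝ, 0 < C₁ ∧
      ∀ (H : ℝ), 0 < H →
      ∀ (j₀ : ℕ), 100 * max 1 (C^2) * H^2 < (2:ℝ)^(5*j₀) →
      ∀ I : ℕ → ℝ → ℝ,
        (∀ j, j₀ ≤ j → ∀ t, 0 ≤ t → 0 ≤ I j t) →
        (∀ j, j₀ ≤ j → ∀ t, 0 ≤ t → DifferentiableWithinAt ℝ (I j) (Set.Ici 0) t) →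
        (∀ t, 0 ≤ t → I j₀ t ≤ H^2) →
        (∀ j, j₀ ≤ j → I j 0 ≤ H^2) →
        (∀ j, j₀ < j → ∀ t, 0 ≤ t →
          derivWithin (I j) (Set.Ici 0) t + (2:ℝ)^(4*j) * I j t ≤
            C * (2:ℝ) ^ (-(j:ℝ)) * H^2 * I (j-1) t) →
        ∀ j, j₀ ≤ j → ∀ t, 0 ≤ t →
          I j t ≤ C₁^(j+1) * (2:ℝ) ^ (-(min t (5/2)) * ((j:ℝ) - (j₀:ℝ))^2) * H^2 := by
  refine ⟨2, two_pos, fun H _ j₀ hj₀ I _ hdiff hbase hinit hode => ?_⟩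
  have hCH : 100 * (C * H ^ 2) < 2 ^ (5 * j₀) := by
    have hC_le : C ≤ max 1 (C ^ 2) := by
      rcases le_total C 1 with h | h
      · exact h.trans (le_max_left _ _)
      · exact le_max_of_le_right (by nlinarith)
    nlinarith [mul_le_mul_of_nonneg_right hC_le (sq_nonneg H)]
  intro j hj
  induction j, hj using Nat.le_induction with
  | base =>
    intro t ht
    rw [sub_self, zero_pow two_ne_zero, mul_zero, rpow_zero, mul_one]
    nlinarith [hbase t ht, one_le_pow₀ (M₀ := ℝ) (n := j₀ + 1) one_le_two, sq_nonneg H]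
  | succ m hm ih =>
    exact gevrey_bound_succ hC.le hm hCH (hdiff (m + 1) (by omega)) (hinit (m + 1) (by omega))
      (fun t ht => by simpa using hode (m + 1) (by omega) t ht) ih
end

section
/- (Discrete Gevrey–Gronwall induction, Burgers form.) Let 1 < s ≤ 2, 0 < δ < 1, D ≥ 1, and C > 0. Suppose that for each integer j ≥ 0, I_j : [0,∞) → [0,∞) is a differentiable function satisfying: (i) I_j(t) ≤ D for all j ≥ 0 and t ≥ 0; (ii) I_j'(t) + 2^{js} I_j(t) ≤ C · 2^{j(2 + 2δ(s-1) - s)} · D · I_{j-1}(t) for all j ≥ 1 and all t ≥ 0. Then there exists a constant C₀ depending only on C, s, δ such that for all j ≥ 0 and all t ≥ 0: I_j(t) ≤ (C₀ D)^{j+1} · 2^{-min(t,1)(1-δ)(s-1) j²}. -/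
/-!
Induction on `j`. Write the weight as `exp (-(c_j * min t 1))` with
`c_j = (1 - δ) (s - 1) log 2 · j²`. Since `exp (-(c * min t 1)) ≤ exp (-(c t)) + exp (-c)`,
the bound for `I_{j-1}` turns the hypothesis on `f = I_j` into
`f' + P f ≤ M (exp (-(c t)) + exp (-c))` with `P = 2^{js}` and `c = c_{j-1}`, and the
integrating factor `exp (P t)` gives
`f t ≤ D exp (-(P t)) + M / (P - c) · exp (-(c t)) + M / P · exp (-c)`.
The dissipation `P` dominates both `2 c_j` and `2^{j(2+2δ(s-1)-s)} · exp (c_j - c_{j-1})` (the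
exponents differ by `(1 - δ) (s - 1) ≥ 0`), so
`I_j ≤ (D + 3 C D (C₀ D)^j) exp (-(c_j * min t 1))`, and `C₀ = 3 C + 1` closes the induction.
-/

open Set Real

theorem le_of_derivWithin_add_mul_le {f : ℝ → ℝ} {P γ A B : ℝ} (hγP : γ < P) (hP : 0 < P)
    (hA : 0 ≤ A) (hB : 0 ≤ B)
    (hf : ∀ t, 0 ≤ t → DifferentiableWithinAt ℝ f (Ici 0) t)
    (hf' : ∀ t, 0 < t → derivWithin f (Ici 0) t + P * f t ≤ A * exp (-(γ * t)) + B)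
    {t : ℝ} (ht : 0 ≤ t) :
    f t ≤ f 0 * exp (-(P * t)) + A / (P - γ) * exp (-(γ * t)) + B / P := by
  -- `f` minus a particular solution of `f' + P f = A exp (-(γ t)) + B`
  set h : ℝ → ℝ := fun u => f u - A / (P - γ) * exp (-(γ * u)) - B / P
  have hPγ : P - γ ≠ 0 := (sub_pos.2 hγP).ne'
  have hderiv : ∀ u, 0 ≤ u → HasDerivWithinAt (fun u => exp (P * u) * h u)
      (exp (P * u) * (derivWithin f (Ici 0) u + P * f u - (A * exp (-(γ * u)) + B)))
      (Ici 0) u := by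
    intro u hu
    have hgrow : HasDerivAt (fun u => exp (P * u)) (exp (P * u) * P) u := by
      simpa using ((hasDerivAt_id u).const_mul P).exp
    have hdecay : HasDerivAt (fun u => exp (-(γ * u))) (exp (-(γ * u)) * -γ) u := by
      simpa using ((hasDerivAt_id u).const_mul γ).neg.exp
    have hsub := ((hf u hu).hasDerivWithinAt.sub
      ((hdecay.const_mul (A / (P - γ))).hasDerivWithinAt)).sub_const (B / P)
    exact (hgrow.hasDerivWithinAt.mul hsub).congr_deriv
      (by simp only [Pi.sub_apply]; field_simp; ring)
  have hanti : AntitoneOn (fun u => exp (P * u) * h u) (Ici 0) := by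
    refine antitoneOn_of_hasDerivWithinAt_nonpos (f' := fun u =>
      exp (P * u) * (derivWithin f (Ici 0) u + P * f u - (A * exp (-(γ * u)) + B))) (convex_Ici 0)
      (fun u hu => (hderiv u hu).continuousWithinAt) (fun u hu => ?_) (fun u hu => ?_)
    all_goals rw [interior_Ici] at hu
    · exact (hderiv u hu.le).mono interior_subset
    · exact mul_nonpos_of_nonneg_of_nonpos (exp_pos _).le (sub_nonpos.2 (hf' u hu))
  have hmono : exp (P * t) * h t ≤ f 0 := by
    refine (hanti self_mem_Ici ht ht).trans ?_
    simp only [h, mul_zero, neg_zero, exp_zero, one_mul, mul_one]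
    have : 0 ≤ A / (P - γ) := div_nonneg hA (sub_pos.2 hγP).le
    have : 0 ≤ B / P := div_nonneg hB hP.le
    linarith
  have hdecay : h t ≤ f 0 * exp (-(P * t)) := by
    rw [exp_neg, ← div_eq_mul_inv, le_div_iff₀ (exp_pos _), mul_comm]; exact hmono
  simp only [h] at hdecay
  linarith

lemma exp_neg_mul_min_one_le (c t : ℝ) :
    exp (-(c * min t 1)) ≤ exp (-(c * t)) + exp (-c) := by
  rcases le_total t 1 with h | h
  · rw [min_eq_left h]; linarith [exp_pos (-c)]
  · rw [min_eq_right h, mul_one]; linarith [exp_pos (-(c * t))]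

lemma exp_neg_sub_mul_le {c c' t : ℝ} (hc : 0 ≤ c) (hcc' : c ≤ c') (ht : 0 ≤ t) :
    exp (-(c' - c)) * (2 * exp (-(c * t)) + exp (-c)) ≤ 3 * exp (-(c' * min t 1)) := by
  have hm0 : 0 ≤ min t 1 := le_min ht zero_le_one
  have hm1 : min t 1 ≤ 1 := min_le_right t 1
  have hmt : min t 1 ≤ t := min_le_left t 1
  have htrans : exp (-(c' - c)) * exp (-(c * t)) ≤ exp (-(c' * min t 1)) := by
    rw [← exp_add]; gcongr; nlinarith
  have hconst : exp (-(c' - c)) * exp (-c) ≤ exp (-(c' * min t 1)) := by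
    rw [← exp_add]; gcongr; nlinarith
  linarith

theorem le_exp_neg_mul_min_one_of_forced_decay {f g : ℝ → ℝ} {P Q c c' C D R : ℝ}
    (hc : 0 ≤ c) (hcc' : c ≤ c') (hc'P : 2 * c' ≤ P)
    (hQ : 0 < Q) (hQP : Q * exp (c' - c) ≤ P)
    (hC : 0 ≤ C) (hD : 0 ≤ D) (hR : 0 ≤ R)
    (hf : ∀ t, 0 ≤ t → DifferentiableWithinAt ℝ f (Ici 0) t) (hf0 : f 0 ≤ D)
    (hf' : ∀ t, 0 < t → derivWithin f (Ici 0) t + P * f t ≤ C * Q * D * g t)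
    (hg : ∀ t, 0 ≤ t → g t ≤ R * exp (-(c * min t 1)))
    {t : ℝ} (ht : 0 ≤ t) :
    f t ≤ (D + 3 * (C * D * R)) * exp (-(c' * min t 1)) := by
  set M := C * Q * D * R
  have hM : 0 ≤ M := by positivity
  have hP : 0 < P := (mul_pos hQ (exp_pos _)).trans_le hQP
  have hforce : ∀ u, 0 < u →
      derivWithin f (Ici 0) u + P * f u ≤ M * exp (-(c * u)) + M * exp (-c) := by
    intro u hu
    calc derivWithin f (Ici 0) u + P * f u ≤ C * Q * D * (R * exp (-(c * min u 1))) :=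
          (hf' u hu).trans (mul_le_mul_of_nonneg_left (hg u hu.le) (by positivity))
      _ ≤ C * Q * D * (R * (exp (-(c * u)) + exp (-c))) := by
          gcongr; exact exp_neg_mul_min_one_le c u
      _ = _ := by ring
  have hduhamel := le_of_derivWithin_add_mul_le (by linarith) hP hM
    (mul_nonneg hM (exp_pos _).le) hf hforce ht
  have hMP : M / P ≤ C * D * R * exp (-(c' - c)) := by
    rw [div_le_iff₀ hP, exp_neg, ← div_eq_mul_inv, div_mul_eq_mul_div,
      le_div_iff₀ (exp_pos _)]
    calc M * exp (c' - c) = C * D * R * (Q * exp (c' - c)) := by ring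
      _ ≤ C * D * R * P := by gcongr
  have hMPc : M / (P - c) ≤ 2 * (M / P) := by
    calc M / (P - c) ≤ M / (P / 2) := div_le_div_of_nonneg_left hM (half_pos hP) (by linarith)
      _ = 2 * (M / P) := by ring
  have hinit : f 0 * exp (-(P * t)) ≤ D * exp (-(c' * min t 1)) :=
    (mul_le_mul_of_nonneg_right hf0 (exp_pos _).le).trans <| mul_le_mul_of_nonneg_left
      (exp_le_exp.2 (by nlinarith [min_le_left t 1, le_min ht zero_le_one])) hD
  have hforced : M / (P - c) * exp (-(c * t)) + M * exp (-c) / P ≤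
      3 * (C * D * R) * exp (-(c' * min t 1)) :=
    calc M / (P - c) * exp (-(c * t)) + M * exp (-c) / P
        ≤ M / P * (2 * exp (-(c * t)) + exp (-c)) := by
          have := mul_le_mul_of_nonneg_right hMPc (exp_pos (-(c * t))).le
          linarith [show M * exp (-c) / P = M / P * exp (-c) by ring]
      _ ≤ C * D * R * exp (-(c' - c)) * (2 * exp (-(c * t)) + exp (-c)) :=
          mul_le_mul_of_nonneg_right hMP (by positivity)
      _ ≤ C * D * R * (3 * exp (-(c' * min t 1))) := by
          rw [mul_assoc]
          exact mul_le_mul_of_nonneg_left (exp_neg_sub_mul_le hc hcc' ht) (by positivity)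
      _ = 3 * (C * D * R) * exp (-(c' * min t 1)) := by ring
  linarith

lemma two_mul_mul_log_two_mul_sq_le_two_rpow {a s : ℝ} (hs : 1 ≤ s) (has : a ≤ s - 1)
    (k : ℕ) :
    2 * (a * log 2 * (k : ℝ) ^ 2) ≤ (2 : ℝ) ^ ((k : ℝ) * s) := by
  have hlog := log_pos one_lt_two
  have hk : 2 * (k : ℝ) ≤ (2 : ℝ) ^ (k : ℝ) := by
    rw [rpow_natCast]
    rcases k with _ | m
    · simp
    · have := Nat.lt_two_pow_self (n := m)
      exact_mod_cast (show 2 * (m + 1) ≤ 2 ^ (m + 1) by rw [pow_succ]; omega)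
  have hexp : (k : ℝ) * (s - 1) * log 2 ≤ (2 : ℝ) ^ ((k : ℝ) * (s - 1)) := by
    rw [rpow_def_of_pos two_pos, mul_comm (log 2)]
    linarith [add_one_le_exp ((k : ℝ) * (s - 1) * log 2)]
  calc 2 * (a * log 2 * (k : ℝ) ^ 2) ≤ (2 * k) * (k * (s - 1) * log 2) := by
        have : 0 ≤ (k : ℝ) ^ 2 * log 2 := by positivity
        nlinarith
    _ ≤ (2 : ℝ) ^ (k : ℝ) * (2 : ℝ) ^ ((k : ℝ) * (s - 1)) := by
        gcongr
    _ = (2 : ℝ) ^ ((k : ℝ) * s) := by rw [← rpow_add two_pos]; ring_nf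

lemma two_rpow_mul_exp_le_two_rpow {s δ : ℝ} (hs : 1 ≤ s) (hδ : δ ≤ 1) (n : ℕ) :
    (2 : ℝ) ^ (((n + 1 : ℕ) : ℝ) * (2 + 2 * δ * (s - 1) - s)) *
        exp ((1 - δ) * (s - 1) * log 2 * ((n + 1 : ℕ) : ℝ) ^ 2
          - (1 - δ) * (s - 1) * log 2 * (n : ℝ) ^ 2) ≤
      (2 : ℝ) ^ (((n + 1 : ℕ) : ℝ) * s) := by
  have ha : 0 ≤ (1 - δ) * (s - 1) := mul_nonneg (by linarith) (by linarith)
  rw [rpow_def_of_pos two_pos, rpow_def_of_pos two_pos, ← exp_add, exp_le_exp]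
  push_cast
  nlinarith [log_pos one_lt_two]

lemma two_rpow_neg_mul_eq_exp (m a b x : ℝ) :
    (2 : ℝ) ^ (-m * a * b * x) = exp (-(a * b * log 2 * x * m)) := by
  rw [rpow_def_of_pos two_pos]; ring_nf

theorem discrete_gevrey_gronwall_burgers_general
    (s δ C : ℝ) (hs1 : 1 < s) (hδ0 : 0 < δ) (hδ1 : δ < 1) (hC : 0 < C) :
    ∃ C₀ : ℝ, 0 < C₀ ∧
      ∀ (D : ℝ), 1 ≤ D →
      ∀ I : ℕ → ℝ → ℝ,
        (∀ j, ∀ t, 0 ≤ t → 0 ≤ I j t) →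
        (∀ j, ∀ t, 0 ≤ t → DifferentiableWithinAt ℝ (I j) (Set.Ici 0) t) →
        (∀ j, ∀ t, 0 ≤ t → I j t ≤ D) →
        (∀ j : ℕ, 1 ≤ j → ∀ t, 0 ≤ t →
          derivWithin (I j) (Set.Ici 0) t + (2:ℝ) ^ ((j:ℝ)*s) * I j t ≤
            C * (2:ℝ) ^ ((j:ℝ)*(2 + 2*δ*(s-1) - s)) * D * I (j-1) t) →
        ∀ j : ℕ, ∀ t, 0 ≤ t →
          I j t ≤ (C₀ * D)^(j+1) * (2:ℝ) ^ (-(min t 1) * (1-δ) * (s-1) * (j:ℝ)^2) := by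
  refine ⟨3 * C + 1, by positivity, fun D hD I _ hdiff hbdd hode j => ?_⟩
  induction j with
  | zero =>
    intro t ht
    simpa using (hbdd 0 t ht).trans (le_mul_of_one_le_left (by linarith) (by linarith))
  | succ n ih =>
    intro t ht
    simp only [two_rpow_neg_mul_eq_exp] at ih ⊢
    have hR : 1 ≤ ((3 * C + 1) * D) ^ (n + 1) := one_le_pow₀ (by nlinarith)
    refine (le_exp_neg_mul_min_one_of_forced_decay (g := I n) (by positivity) (by gcongr; simp)
      (two_mul_mul_log_two_mul_sq_le_two_rpow hs1.le (by nlinarith) _) (by positivity)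
      (two_rpow_mul_exp_le_two_rpow hs1.le hδ1.le n) hC.le (by linarith) (by linarith)
      (hdiff _) (hbdd _ 0 le_rfl)
      (fun t ht => by simpa only [Nat.add_sub_cancel] using hode (n + 1) (by omega) t ht.le)
      ih ht).trans ?_
    gcongr
    rw [pow_succ _ (n + 1)]
    nlinarith [mul_le_mul_of_nonneg_right hR (by linarith : (0 : ℝ) ≤ D)]

/-- Discrete Gevrey–Gronwall induction, Burgers form: from
`I_j ≤ D` and `I_j' + 2^{js} I_j ≤ C 2^{j(2+2δ(s-1)-s)} D I_{j-1}` one deduces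
`I_j(t) ≤ (C₀ D)^{j+1} 2^{-min(t,1)(1-δ)(s-1) j²}`, with `C₀ = C₀(C,s,δ)`. -/
theorem discrete_gevrey_gronwall_burgers
    (s δ C : ℝ) (hs1 : 1 < s) (hs2 : s ≤ 2) (hδ0 : 0 < δ) (hδ1 : δ < 1) (hC : 0 < C) :
    ∃ C₀ : ℝ, 0 < C₀ ∧
      ∀ (D : ℝ), 1 ≤ D →
      ∀ I : ℕ → ℝ → ℝ,
        (∀ j, ∀ t, 0 ≤ t → 0 ≤ I j t) →
        (∀ j, ∀ t, 0 ≤ t → DifferentiableWithinAt ℝ (I j) (Set.Ici 0) t) →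
        (∀ j, ∀ t, 0 ≤ t → I j t ≤ D) →
        (∀ j : ℕ, 1 ≤ j → ∀ t, 0 ≤ t →
          derivWithin (I j) (Set.Ici 0) t + (2:ℝ) ^ ((j:ℝ)*s) * I j t ≤
            C * (2:ℝ) ^ ((j:ℝ)*(2 + 2*δ*(s-1) - s)) * D * I (j-1) t) →
        ∀ j : ℕ, ∀ t, 0 ≤ t →
          I j t ≤ (C₀ * D)^(j+1) * (2:ℝ) ^ (-(min t 1) * (1-δ) * (s-1) * (j:ℝ)^2) :=
  discrete_gevrey_gronwall_burgers_general s δ C hs1 hδ0 hδ1 hC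
end
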